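/- The expected squared distance of X from the point (1/2, 3/4) equals 7/32, i.e., ∫ ‖x − (1/2, 3/4)‖² dP(x) = 7/32. -/

import Mathlib

/-!
Each map `S i` is a `1/3`-contraction of the unit square `K` into itself, so the self-similarity
equation gives `P {d(·, K) > c t} ≤ P {d(·, K) > t}` with `c = 1/3`; iterating and letting
`t → ∞` shows that `P` is carried by `K`, hence every continuous function is `P`-integrable.
For `f x = ‖x - (1/2, 3/4)‖²` the self-similarity equation then reads
`∫ f dP = ∫ (f/9 + 7/36) dP`, i.e. `(8/9) ∫ f dP = 7/36`.
-/


open MeasureTheory ProbabilityTheory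
open scoped ENNReal

noncomputable section

abbrev E2 : Type := EuclideanSpace ℝ (Fin 2)

/-- The point (a,b) of the Euclidean plane. -/
def pt (a b : ℝ) : E2 := (WithLp.equiv 2 (Fin 2 → ℝ)).symm ![a, b]

/-- The four generating similarities S₁,…,S₄ (indexed 0,…,3) of the Sierpiński carpet. -/
def S : Fin 4 → E2 → E2
  | 0 => fun x => pt (x 0 / 3) (x 1 / 3)
  | 1 => fun x => pt (x 0 / 3 + 2/3) (x 1 / 3)
  | 2 => fun x => pt (x 0 / 3) (x 1 / 3 + 2/3)
  | 3 => fun x => pt (x 0 / 3 + 2/3) (x 1 / 3 + 2/3)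

/-- The self-affinity equation P = (1/8)P∘S₁⁻¹ + (1/8)P∘S₂⁻¹ + (3/8)P∘S₃⁻¹ + (3/8)P∘S₄⁻¹. -/
def carpetEq (P : Measure E2) : Prop :=
  P = (1/8 : ℝ≥0∞) • P.map (S 0) + (1/8 : ℝ≥0∞) • P.map (S 1)
    + (3/8 : ℝ≥0∞) • P.map (S 2) + (3/8 : ℝ≥0∞) • P.map (S 3)

/-- The unit square [0,1]². -/
def unitSq : Set E2 := {x | ∀ i, x i ∈ Set.Icc (0:ℝ) 1}

/-- S_ω = S_{ω₁} ∘ ⋯ ∘ S_{ω_k} for a word ω. -/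
def Sw (w : List (Fin 4)) : E2 → E2 := fun x => w.foldr S x

/-- The basic square J_ω = S_ω([0,1]²). -/
def Jw (w : List (Fin 4)) : Set E2 := Sw w '' unitSq

/-- The basic square J_i of the first level. -/
def Jset (i : Fin 4) : Set E2 := S i '' unitSq

/-- The mass centroid (conditional expectation) of P on a set A. -/
def ctr (P : Measure E2) (A : Set E2) : E2 := (P A).toReal⁻¹ • ∫ x in A, x ∂P

/-- E(ω) : distortion error on J_ω about its centroid a(ω) = S_ω(1/2,3/4). -/
def Err (P : Measure E2) (w : List (Fin 4)) : ℝ :=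
  ∫ x in Jw w, ‖x - Sw w (pt (1/2) (3/4))‖^2 ∂P

/-- E(ωi, ωj) : distortion error on J_{ωi} ∪ J_{ωj} about its centroid. -/
def Epair (P : Measure E2) (w : List (Fin 4)) (i j : Fin 4) : ℝ :=
  ∫ x in (Jw (w ++ [i]) ∪ Jw (w ++ [j])),
    ‖x - ctr P (Jw (w ++ [i]) ∪ Jw (w ++ [j]))‖^2 ∂P

open Metric Set Filter Topology
open scoped NNReal

theorem LipschitzWith.infDist_le_mul_infDist {X : Type*} [MetricSpace X] {K : Set X} {c : ℝ≥0}
    {f : X → X} (hf : LipschitzWith c f) (hK : MapsTo f K K) (x : X) :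
    infDist (f x) K ≤ c * infDist x K := by
  rcases K.eq_empty_or_nonempty with rfl | ⟨y, hy⟩
  · simp
  rcases eq_or_ne c 0 with rfl | hc
  · have hfxy : f x = f y := by simpa using hf.dist_le_mul x y
    simp [hfxy, infDist_zero_of_mem (hK hy)]
  have hc : (0 : ℝ) < c := by positivity
  refine (div_le_iff₀' hc).1 ((le_infDist ⟨y, hy⟩).2 fun z hz => (div_le_iff₀' hc).2 ?_)
  exact (infDist_le_dist_of_mem (hK hz)).trans (hf.dist_le_mul x z)

theorem Continuous.integrable_of_ae_mem_isCompact {X E : Type*} [TopologicalSpace X]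
    [T2Space X] [MeasurableSpace X] [OpensMeasurableSpace X] [NormedAddCommGroup E] {P : Measure X}
    [IsFiniteMeasure P] {K : Set X} (hK : IsCompact K) (hPK : ∀ᵐ x ∂P, x ∈ K) {f : X → E}
    (hf : Continuous f) : Integrable f P := by
  rw [← Measure.restrict_eq_self_of_ae_mem hPK]
  exact hf.continuousOn.integrableOn_compact hK

def IsSelfSimilarMeasure {X ι : Type*} [MeasurableSpace X] [Fintype ι] (S : ι → X → X)
    (p : ι → ℝ≥0∞) (P : Measure X) : Prop :=
  P = ∑ i, p i • P.map (S i)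

namespace IsSelfSimilarMeasure

variable {X ι : Type*} [MeasurableSpace X] [Fintype ι] {S : ι → X → X} {p : ι → ℝ≥0∞}
  {P : Measure X}

theorem integral_eq_integral_sum_comp {E : Type*} [NormedAddCommGroup E] [NormedSpace ℝ E]
    (hP : IsSelfSimilarMeasure S p P) (hp : ∀ i, p i ≠ ∞) (hS : ∀ i, Measurable (S i))
    {f : X → E} (hf : StronglyMeasurable f) (hfS : ∀ i, Integrable (fun x => f (S i x)) P) :
    ∫ x, f x ∂P = ∫ x, ∑ i, (p i).toReal • f (S i x) ∂P := by
  have hmap : ∀ i, Integrable f (P.map (S i)) := fun i =>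
    (integrable_map_measure hf.aestronglyMeasurable (hS i).aemeasurable).2 (hfS i)
  conv_lhs => rw [hP]
  rw [integral_finsetSum_measure fun i _ => (hmap i).smul_measure (hp i),
    integral_finsetSum (f := fun i x => (p i).toReal • f (S i x)) _ fun i _ => (hfS i).smul _]
  refine Finset.sum_congr rfl fun i _ => ?_
  rw [integral_smul_measure, integral_map (hS i).aemeasurable hf.aestronglyMeasurable,
    integral_smul]

variable [MetricSpace X] [BorelSpace X] {K : Set X} {c : ℝ≥0}

theorem measure_lt_infDist_mul_le (hP : IsSelfSimilarMeasure S p P) (hp : ∑ i, p i = 1)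
    (hS : ∀ i, LipschitzWith c (S i)) (hK : ∀ i, MapsTo (S i) K K) (t : ℝ) :
    P {x | c * t < infDist x K} ≤ P {x | t < infDist x K} := by
  have hopen : ∀ s : ℝ, MeasurableSet {x | s < infDist x K} := fun s =>
    (isOpen_lt continuous_const (continuous_infDist_pt K)).measurableSet
  have hpre : ∀ i, S i ⁻¹' {x | c * t < infDist x K} ⊆ {x | t < infDist x K} := fun i x hx =>
    lt_of_mul_lt_mul_left (hx.trans_le ((hS i).infDist_le_mul_infDist (hK i) x)) c.coe_nonneg
  conv_lhs => rw [hP]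
  simp only [Measure.finsetSum_apply, Measure.smul_apply, smul_eq_mul,
    Measure.map_apply (hS _).continuous.measurable (hopen _)]
  calc ∑ i, p i * P (S i ⁻¹' {x | c * t < infDist x K})
      ≤ ∑ i, p i * P {x | t < infDist x K} := by gcongr with i; exact hpre i
    _ = P {x | t < infDist x K} := by rw [← Finset.sum_mul, hp, one_mul]

theorem measure_lt_infDist_eq_zero [IsFiniteMeasure P] (hP : IsSelfSimilarMeasure S p P)
    (hp : ∑ i, p i = 1) (hS : ∀ i, LipschitzWith c (S i)) (hK : ∀ i, MapsTo (S i) K K)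
    (hc : c < 1) {r : ℝ} (hr : 0 < r) : P {x | r < infDist x K} = 0 := by
  have hanti : Antitone fun t : ℝ => {x | t < infDist x K} := fun s t hst x hx => hst.trans_lt hx
  have hpow : ∀ (n : ℕ) t, P {x | c ^ n * t < infDist x K} ≤ P {x | t < infDist x K} := by
    intro n t
    induction n with
    | zero => simp
    | succ n ih =>
      rw [pow_succ', mul_assoc]
      exact (hP.measure_lt_infDist_mul_le hp hS hK _).trans ih
  have hle : ∀ t, P {x | r < infDist x K} ≤ P {x | t < infDist x K} := fun t => by
    obtain ⟨n, hn⟩ := (((tendsto_pow_atTop_nhds_zero_of_lt_one c.coe_nonneg hc).mul_const t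
      ).eventually (gt_mem_nhds (by simpa using hr))).exists
    exact (measure_mono (hanti hn.le)).trans (hpow n t)
  have hlim : Tendsto (fun t => P {x | t < infDist x K}) atTop (𝓝 0) := by
    have hempty : ⋂ t : ℝ, {x | t < infDist x K} = ∅ :=
      iInter_eq_empty_iff.2 fun x => ⟨infDist x K, lt_irrefl (infDist x K)⟩
    have := tendsto_measure_iInter_atTop (μ := P)
      (fun t => (isOpen_lt continuous_const (continuous_infDist_pt K)).nullMeasurableSet)
      hanti ⟨0, measure_ne_top P _⟩
    rwa [hempty, measure_empty] at this
  exact nonpos_iff_eq_zero.1 (ge_of_tendsto' hlim hle)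

theorem ae_mem [IsFiniteMeasure P] (hP : IsSelfSimilarMeasure S p P) (hp : ∑ i, p i = 1)
    (hS : ∀ i, LipschitzWith c (S i)) (hK : ∀ i, MapsTo (S i) K K) (hc : c < 1)
    (hKc : IsClosed K) (hKne : K.Nonempty) : ∀ᵐ x ∂P, x ∈ K := by
  have hcover : Kᶜ ⊆ ⋃ n : ℕ, {x | 1 / (n + 1 : ℝ) < infDist x K} := fun x hx => by
    obtain ⟨n, hn⟩ := exists_nat_one_div_lt ((hKc.notMem_iff_infDist_pos hKne).1 hx)
    exact mem_iUnion.2 ⟨n, hn⟩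
  exact measure_mono_null hcover (measure_iUnion_null fun n =>
    hP.measure_lt_infDist_eq_zero hp hS hK hc (by positivity))

end IsSelfSimilarMeasure

theorem S_apply_eq_smul_add (i : Fin 4) (x : E2) : S i x = (3 : ℝ)⁻¹ • x + S i 0 := by
  ext j
  fin_cases i <;> fin_cases j <;> simp [S, pt] <;> ring

theorem lipschitzWith_S (i : Fin 4) : LipschitzWith 3⁻¹ (S i) := by
  refine LipschitzWith.of_dist_le_mul fun x y => ?_
  rw [S_apply_eq_smul_add i x, S_apply_eq_smul_add i y, dist_add_right, dist_smul₀]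
  simp

theorem mapsTo_S_unitSq (i : Fin 4) : MapsTo (S i) unitSq unitSq := by
  intro x hx j
  have h0 := hx 0
  have h1 := hx 1
  simp only [Set.mem_Icc] at h0 h1 ⊢
  fin_cases i <;> fin_cases j <;> simp [S, pt] <;> constructor <;> linarith

theorem isCompact_unitSq : IsCompact unitSq := by
  have : unitSq = PiLp.homeomorph 2 _ ⁻¹' Set.univ.pi fun _ => Set.Icc (0 : ℝ) 1 := by
    ext x
    simp only [unitSq, Set.mem_preimage, Set.mem_univ_pi]
    rfl
  rw [this, Homeomorph.isCompact_preimage]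
  exact isCompact_univ_pi fun _ => isCompact_Icc

theorem zero_mem_unitSq : (0 : E2) ∈ unitSq := fun i => by simp

def carpetWeight : Fin 4 → ℝ≥0∞ := ![1/8, 1/8, 3/8, 3/8]

theorem carpetWeight_ne_top (i : Fin 4) : carpetWeight i ≠ ∞ := by
  fin_cases i <;> simp [carpetWeight, ENNReal.div_eq_top]

theorem sum_carpetWeight : ∑ i, carpetWeight i = 1 := by
  rw [Fin.sum_univ_four]
  change (1/8 : ℝ≥0∞) + 1/8 + 3/8 + 3/8 = 1
  rw [ENNReal.div_add_div_same, ENNReal.div_add_div_same, ENNReal.div_add_div_same]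
  norm_num
  exact ENNReal.div_self (by norm_num) (by norm_num)

theorem carpetEq_iff (P : Measure E2) : carpetEq P ↔ IsSelfSimilarMeasure S carpetWeight P := by
  simp [carpetEq, IsSelfSimilarMeasure, carpetWeight, Fin.sum_univ_four]

-- `(1/2, 3/4)` is the fixed point of `x ↦ ∑ i, pᵢ • S i x`, so the terms linear in `x` cancel.
theorem sum_carpetWeight_smul_norm_sub_sq (x : E2) :
    ∑ i, (carpetWeight i).toReal • ‖S i x - pt (1/2) (3/4)‖ ^ 2
      = ‖x - pt (1/2) (3/4)‖ ^ 2 / 9 + 7/36 := by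
  simp [EuclideanSpace.real_norm_sq_eq, Fin.sum_univ_four, Fin.sum_univ_two, carpetWeight, S, pt]
  ring

theorem total_variance (P : Measure E2) [IsProbabilityMeasure P] (hP : carpetEq P) :
    ∫ x : E2, ‖x - pt (1/2) (3/4)‖^2 ∂P = 7/32 := by
  rw [carpetEq_iff] at hP
  have hsupp : ∀ᵐ x ∂P, x ∈ unitSq := hP.ae_mem sum_carpetWeight lipschitzWith_S
    mapsTo_S_unitSq (by norm_num) isCompact_unitSq.isClosed ⟨0, zero_mem_unitSq⟩
  have hint {f : E2 → ℝ} (hf : Continuous f) : Integrable f P :=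
    hf.integrable_of_ae_mem_isCompact isCompact_unitSq hsupp
  have hcont : Continuous fun x : E2 => ‖x - pt (1/2) (3/4)‖ ^ 2 := by fun_prop
  have hself := hP.integral_eq_integral_sum_comp carpetWeight_ne_top
    (fun i => (lipschitzWith_S i).continuous.measurable) hcont.stronglyMeasurable
    (fun i => hint (hcont.comp (lipschitzWith_S i).continuous))
  simp_rw [sum_carpetWeight_smul_norm_sub_sq] at hself
  rw [integral_add ((hint hcont).div_const 9) (integrable_const _), integral_div,
    integral_const] at hself
  simp only [probReal_univ, smul_eq_mul, one_mul] at hself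
  linarith
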